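/- Let γ be a permutation of ℤ that is the translation x ↦ x + 1, and let τ, τ' be transpositions of ℤ. If τ' = γ^{-m} τ γ^m for some integer m, then τ and τ' are twisted-conjugate in FSym(ℤ) with respect to the automorphism μ(γ): h ↦ γ⁻¹hγ. -/

import Mathlib

/-!
Let `s = τ γ⁻¹`. The element `h = γ⁻ᵐ s⁻ᵐ` satisfies `h τ (γ⁻¹ h γ)⁻¹ = γ⁻ᵐ s⁻ᵐ · s · sᵐ γᵐ = γ⁻ᵐ τ γᵐ`,
and `h` is finitely supported because it is trivial modulo the normal subgroup of finitely supported
permutations, in which `τ` lies: there `s ≡ γ⁻¹`, so `h ≡ γ⁻ᵐ γᵐ = 1`.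
-/

namespace Equiv.Perm

variable {α : Type*}

def finitary (α : Type*) : Subgroup (Perm α) where
  carrier := {σ | {x | σ x ≠ x}.Finite}
  one_mem' := by simp
  mul_mem' {σ τ} hσ hτ := (hσ.union hτ).subset (set_support_mul_subset σ τ)
  inv_mem' {σ} hσ := by
    change {x | σ.symm x ≠ x}.Finite
    rwa [set_support_symm_eq]

instance finitary_normal : (finitary α).Normal where
  conj_mem σ hσ g := by
    refine (hσ.image g).subset fun x hx => ⟨g⁻¹ x, ?_, by simp⟩
    simpa [← Equiv.Perm.eq_inv_iff_eq] using hx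

theorem swap_mem_finitary [DecidableEq α] (a b : α) : swap a b ∈ finitary α := by
  refine (Set.toFinite {a, b}).subset fun x hx => ?_
  by_contra hab
  simp only [Set.mem_insert_iff, Set.mem_singleton_iff, not_or] at hab
  exact hx (swap_apply_of_ne_of_ne hab.1 hab.2)

end Equiv.Perm

section TwistedConj

variable {G : Type*} [Group G]

def IsTwistedConj (H : Subgroup G) (g x y : G) : Prop :=
  ∃ h ∈ H, y = h * x * (g⁻¹ * h * g)⁻¹

theorem isTwistedConj_zpow_conj {H : Subgroup G} [H.Normal] {x : G} (hx : x ∈ H) (g : G)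
    (m : ℤ) : IsTwistedConj H g x ((g ^ m)⁻¹ * x * g ^ m) := by
  obtain ⟨s, hs⟩ : ∃ s, x * g⁻¹ = s := ⟨_, rfl⟩
  refine ⟨(g ^ m)⁻¹ * s ^ (-m), ?_, ?_⟩
  · rw [← QuotientGroup.eq_one_iff, ← hs]
    have hx1 : (x : G ⧸ H) = 1 := (QuotientGroup.eq_one_iff x).2 hx
    simp only [QuotientGroup.mk_mul, QuotientGroup.mk_inv, QuotientGroup.mk_zpow, hx1]
    group
  · obtain rfl : x = s * g := by rw [← hs]; group
    group

end TwistedConj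

theorem shifted_transpositions_twisted_conjugate_general (γ : Equiv.Perm ℤ)
    (τ τ' : Equiv.Perm ℤ)
    (hτ : τ.IsSwap)
    (hconj : ∃ m : ℤ, τ' = (γ ^ m)⁻¹ * τ * γ ^ m) :
    ∃ h : Equiv.Perm ℤ, {x | h x ≠ x}.Finite ∧ τ' = h * τ * (γ⁻¹ * h * γ)⁻¹ := by
  obtain ⟨m, rfl⟩ := hconj
  obtain ⟨a, b, -, rfl⟩ := hτ
  exact isTwistedConj_zpow_conj (Equiv.Perm.swap_mem_finitary a b) γ m

theorem shifted_transpositions_twisted_conjugate (γ : Equiv.Perm ℤ)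
    (hγ : ∀ x : ℤ, γ x = x + 1) (τ τ' : Equiv.Perm ℤ)
    (hτ : τ.IsSwap) (hτ' : τ'.IsSwap)
    (hconj : ∃ m : ℤ, τ' = (γ ^ m)⁻¹ * τ * γ ^ m) :
    ∃ h : Equiv.Perm ℤ, {x | h x ≠ x}.Finite ∧ τ' = h * τ * (γ⁻¹ * h * γ)⁻¹ :=
  shifted_transpositions_twisted_conjugate_general γ τ τ' hτ hconj
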